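/- In each round t of AdaBoost.S, the edge satisfies δ_t ≥ R_{t−1}/B, where B = ‖λ*‖₁ > 0 and R_{t−1} = ln L(λ^{t−1}) − ln L(λ*). -/

import Mathlib

/-! Write `D` for the AdaBoost distribution at `λ = λᵗ`. The gradient of `log L` at `λ` is
`-DᵀM`, so convexity of `log L` (Jensen for `exp`) gives `log L(λ) - log L(λ*) ≤ D·Mλ* - D·Mλ`. Since `D·Mλ* = ∑ⱼ (DᵀM)ⱼ λ*ⱼ`, the maximality of the chosen
coordinate bounds the first term by `δ‖λ*‖₁`. The second term is nonnegative because of the scaling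
step: `λ = sλ̃` minimises `L` on the segment from `0` to `λ̃`, and moving from `s` towards `0` is
first-order nonincreasing, i.e. `s · d/ds L(sλ̃) ≤ 0`, which is `D·Mλ ≥ 0`. (At `t = 0`, `λ = 0`.) -/

/-- The exponential loss `L(λ) = (1/m) ∑ᵢ exp(−(Mλ)ᵢ)`. -/
noncomputable def expLoss {m N : ℕ} (M : Matrix (Fin m) (Fin N) ℝ) (lam : Fin N → ℝ) : ℝ :=
  (1 / (m : ℝ)) * ∑ i, Real.exp (-(M.mulVec lam i))

/-- AdaBoost's distribution `D(i) ∝ exp(−(Mλ)ᵢ)`. -/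
noncomputable def wt {m N : ℕ} (M : Matrix (Fin m) (Fin N) ℝ) (lam : Fin N → ℝ) (i : Fin m) : ℝ :=
  Real.exp (-(M.mulVec lam i)) / ∑ i', Real.exp (-(M.mulVec lam i'))

/-- The ℓ₁-norm on `ℝ^N`. -/
noncomputable def l1 {N : ℕ} (v : Fin N → ℝ) : ℝ := ∑ j, |v j|


/-- `lam`, `j`, `r`, `s` describe a run of AdaBoost.S on feature matrix `M`:
`lam 0 = 0`; at each round the coordinate `j t` of maximal absolute correlation is chosen,
`r t` is its correlation, the step is `α_t = ½ ln((1+r_t)/(1−r_t))` giving the intermediate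
combination `λ̃ = λ^{t} + α·e_{j t}`, and then `λ^{t+1} = s_t·λ̃` where
`s_t ∈ argmin_{s ∈ [0,1]} L(s·λ̃)`. -/
def IsAdaBoostS {m N : ℕ} (M : Matrix (Fin m) (Fin N) ℝ)
    (lam : ℕ → Fin N → ℝ) (j : ℕ → Fin N) (r : ℕ → ℝ) (s : ℕ → ℝ) : Prop :=
  lam 0 = 0 ∧
  ∀ t : ℕ,
    (∀ j' : Fin N, |∑ i, wt M (lam t) i * M i j'| ≤ |∑ i, wt M (lam t) i * M i (j t)|) ∧
    r t = ∑ i, wt M (lam t) i * M i (j t) ∧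
    s t ∈ Set.Icc (0 : ℝ) 1 ∧
    (∀ s' ∈ Set.Icc (0 : ℝ) 1,
      expLoss M (s t • (lam t + Pi.single (j t) ((1 / 2) * Real.log ((1 + r t) / (1 - r t))))) ≤
      expLoss M (s' • (lam t + Pi.single (j t) ((1 / 2) * Real.log ((1 + r t) / (1 - r t)))))) ∧
    lam (t + 1) = s t • (lam t + Pi.single (j t) ((1 / 2) * Real.log ((1 + r t) / (1 - r t))))

open Real Finset Matrix Set

lemma IsMinOn.sub_mul_nonneg_of_segment_subset {f : ℝ → ℝ} {s : Set ℝ} {a b f' : ℝ}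
    (h : IsMinOn f s a) (hf : HasDerivAt f f' a) (hab : segment ℝ a b ⊆ s) :
    0 ≤ (b - a) * f' := by
  simpa [mul_comm] using h.localize.hasFDerivWithinAt_nonneg
    (hasDerivAt_iff_hasFDerivAt.1 hf).hasFDerivWithinAt
    (sub_mem_posTangentConeAt_of_segment_subset hab)

lemma log_sum_exp_neg_sub_le {ι : Type*} [Fintype ι] [Nonempty ι] (a b : ι → ℝ) :
    log (∑ i, exp (-a i)) - log (∑ i, exp (-b i)) ≤
      ∑ i, exp (-a i) / (∑ k, exp (-a k)) * (b i - a i) := by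
  set Sa := ∑ k, exp (-a k)
  have hSa : 0 < Sa := sum_pos (fun i _ => exp_pos _) univ_nonempty
  have hSb : 0 < ∑ i, exp (-b i) := sum_pos (fun i _ => exp_pos _) univ_nonempty
  have hjensen := convexOn_exp.map_sum_le (t := univ) (w := fun i => exp (-a i) / Sa)
    (p := fun i => a i - b i) (fun i _ => by positivity)
    (by rw [← sum_div, div_self hSa.ne']) (fun i _ => mem_univ _)
  simp only [smul_eq_mul] at hjensen
  have hrhs : ∑ i, exp (-a i) / Sa * exp (a i - b i) = (∑ i, exp (-b i)) / Sa := by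
    rw [sum_div]
    refine sum_congr rfl fun i _ => ?_
    rw [div_mul_eq_mul_div, ← exp_add]
    ring_nf
  rw [hrhs, ← le_log_iff_exp_le (by positivity), log_div hSb.ne' hSa.ne'] at hjensen
  have : ∑ i, exp (-a i) / Sa * (b i - a i) = -∑ i, exp (-a i) / Sa * (a i - b i) := by
    rw [← sum_neg_distrib]
    exact sum_congr rfl fun i _ => by ring
  linarith

variable {m N : ℕ} (M : Matrix (Fin m) (Fin N) ℝ)

lemma log_expLoss_sub_le (hm : 0 < m) (lam mu : Fin N → ℝ) :
    log (expLoss M lam) - log (expLoss M mu) ≤ wt M lam ⬝ᵥ (M *ᵥ mu - M *ᵥ lam) := by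
  have : Nonempty (Fin m) := ⟨⟨0, hm⟩⟩
  have hlog : ∀ v : Fin N → ℝ,
      log (expLoss M v) = log (1 / m) + log (∑ i, exp (-(M *ᵥ v) i)) := fun v =>
    log_mul (by positivity) (sum_pos (fun i _ => exp_pos _) univ_nonempty).ne'
  rw [hlog, hlog, add_sub_add_left_eq_sub]
  exact log_sum_exp_neg_sub_le _ _

lemma hasDerivAt_expLoss_smul (mu : Fin N → ℝ) (x : ℝ) :
    HasDerivAt (fun x : ℝ => expLoss M (x • mu))
      ((1 / m) * ∑ i, exp (-(M *ᵥ (x • mu)) i) * -(M *ᵥ mu) i) x := by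
  simp only [expLoss, mulVec_smul, Pi.smul_apply, smul_eq_mul]
  refine (HasDerivAt.fun_sum fun i _ => ?_).const_mul _
  simpa using ((hasDerivAt_mul_const ((M *ᵥ mu) i)).neg).exp

lemma dotProduct_wt (lam : Fin N → ℝ) (v : Fin m → ℝ) :
    wt M lam ⬝ᵥ v = (∑ i, exp (-(M *ᵥ lam) i) * v i) / ∑ i, exp (-(M *ᵥ lam) i) := by
  simp only [dotProduct, wt, sum_div, div_mul_eq_mul_div]

lemma wt_dotProduct_mulVec_smul_nonneg_of_isMinOn (hm : 0 < m) {mu : Fin N → ℝ} {x : ℝ}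
    (hx : x ∈ Icc (0 : ℝ) 1) (hmin : IsMinOn (fun x : ℝ => expLoss M (x • mu)) (Icc 0 1) x) :
    0 ≤ wt M (x • mu) ⬝ᵥ (M *ᵥ (x • mu)) := by
  have hseg : segment ℝ x 0 ⊆ Icc 0 1 := (convex_Icc 0 1).segment_subset hx ⟨le_rfl, zero_le_one⟩
  have h := hmin.sub_mul_nonneg_of_segment_subset (hasDerivAt_expLoss_smul M mu x) hseg
  have hsum : 0 ≤ ∑ i, exp (-(M *ᵥ (x • mu)) i) * (M *ᵥ (x • mu)) i := by
    have : (0 - x) * ((1 / m) * ∑ i, exp (-(M *ᵥ (x • mu)) i) * -(M *ᵥ mu) i) =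
        (1 / m) * ∑ i, exp (-(M *ᵥ (x • mu)) i) * (M *ᵥ (x • mu)) i := by
      simp only [mul_sum, mulVec_smul, Pi.smul_apply, smul_eq_mul]
      exact sum_congr rfl fun i _ => by ring
    rw [this] at h
    exact nonneg_of_mul_nonneg_right (by rwa [mul_comm] at h) (by positivity)
  rw [dotProduct_wt]
  positivity

lemma dotProduct_le_mul_l1 {u v : Fin N → ℝ} {c : ℝ} (hu : ∀ j, |u j| ≤ c) :
    u ⬝ᵥ v ≤ c * l1 v := by
  rw [l1, mul_sum]
  refine sum_le_sum fun j _ => ?_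
  calc u j * v j ≤ |u j| * |v j| := by rw [← abs_mul]; exact le_abs_self _
    _ ≤ c * |v j| := mul_le_mul_of_nonneg_right (hu j) (abs_nonneg _)

namespace IsAdaBoostS

variable {M} {lam : ℕ → Fin N → ℝ} {j : ℕ → Fin N} {r s : ℕ → ℝ}

lemma wt_dotProduct_mulVec_nonneg (h : IsAdaBoostS M lam j r s) (hm : 0 < m) (t : ℕ) :
    0 ≤ wt M (lam t) ⬝ᵥ (M *ᵥ lam t) := by
  cases t with
  | zero => simp [h.1]
  | succ t =>
    obtain ⟨-, -, hs, hmin, hstep⟩ := h.2 t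
    rw [hstep]
    exact wt_dotProduct_mulVec_smul_nonneg_of_isMinOn M hm hs hmin

end IsAdaBoostS

theorem adaboostS_edge_ge_R_div_B_general {m N : ℕ} (hm : 0 < m)
    (M : Matrix (Fin m) (Fin N) ℝ)
    (lam : ℕ → Fin N → ℝ) (j : ℕ → Fin N) (r : ℕ → ℝ) (s : ℕ → ℝ)
    (hAda : IsAdaBoostS M lam j r s)
    (lamStar : Fin N → ℝ) (hB : 0 < l1 lamStar) (t : ℕ) :
    (Real.log (expLoss M (lam t)) - Real.log (expLoss M lamStar)) / l1 lamStar ≤ |r t| := by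
  obtain ⟨hmax, hr, -⟩ := hAda.2 t
  have hedge : wt M (lam t) ᵥ* M ⬝ᵥ lamStar ≤ |r t| * l1 lamStar :=
    dotProduct_le_mul_l1 fun j' => hr ▸ hmax j'
  have hscale := hAda.wt_dotProduct_mulVec_nonneg hm t
  rw [div_le_iff₀ hB]
  calc log (expLoss M (lam t)) - log (expLoss M lamStar)
      ≤ wt M (lam t) ⬝ᵥ (M *ᵥ lamStar - M *ᵥ lam t) := log_expLoss_sub_le M hm _ _
    _ ≤ wt M (lam t) ᵥ* M ⬝ᵥ lamStar := by
      rw [dotProduct_sub, dotProduct_mulVec]; linarith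
    _ ≤ |r t| * l1 lamStar := hedge

/-- In each round `t` of AdaBoost.S, the edge satisfies `δ_t ≥ R_{t−1}/B`,
where `B = ‖λ*‖₁ > 0` and `R_{t−1} = ln L(λ^{t−1}) − ln L(λ*)`.
(Round `t` is the step from `lam t` to `lam (t+1)`, with edge `|r t|`.) -/
theorem adaboostS_edge_ge_R_div_B {m N : ℕ} (hm : 0 < m)
    (M : Matrix (Fin m) (Fin N) ℝ) (hM : ∀ i j, |M i j| ≤ 1)
    (lam : ℕ → Fin N → ℝ) (j : ℕ → Fin N) (r : ℕ → ℝ) (s : ℕ → ℝ)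
    (hAda : IsAdaBoostS M lam j r s)
    (lamStar : Fin N → ℝ) (hB : 0 < l1 lamStar) (t : ℕ) :
    (Real.log (expLoss M (lam t)) - Real.log (expLoss M lamStar)) / l1 lamStar ≤ |r t| :=
  adaboostS_edge_ge_R_div_B_general hm M lam j r s hAda lamStar hB t
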